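/- arXiv:1602.02204 — 6 statements merged into one kernel-verified Lean document; each statement's English description precedes it below -/
import Mathlib

section
/- Let P be an abelian group (written additively) and let G be a subgroup of P whose torsion subgroup is finite, of order l. Let A ∈ P and let a be a positive integer, and assume there exist p₁, p₂ ∈ P with a·p₁ = a·p₂ = A such that p₁ − p₂ has finite order exactly a. Then there exists p ∈ P with a·p = A and such that m·p ∉ G for every positive integer m with m²·l < a. -/
open Finset
open scoped Classical

lemma card_filter_le {P : Type*} [AddCommGroup P] (G : AddSubgroup P)
    [Finite (AddCommGroup.torsion G)]
    (q p₂ : P) (a : ℕ) (ha : 0 < a) (hq : addOrderOf q = a) (m : ℕ) (hm : 0 < m) :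
    ((Finset.range a).filter (fun k => m • (p₂ + k • q) ∈ G)).card
      ≤ m * Nat.card (AddCommGroup.torsion G) := by
  classical
  haveI : Fintype (AddCommGroup.torsion G) := Fintype.ofFinite _
  set l := Nat.card (AddCommGroup.torsion G) with hl
  set S := (Finset.range a).filter (fun k => m • (p₂ + k • q) ∈ G) with hS
  rcases S.eq_empty_or_nonempty with hE | ⟨k₀, hk₀⟩
  · simp [hE]
  set g := Nat.gcd a m with hgdef
  have hg : 0 < g := Nat.gcd_pos_of_pos_left m ha
  have hgm : g ≤ m := Nat.le_of_dvd hm (Nat.gcd_dvd_right a m)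
  set d := a / g with hd
  have hdg : d * g = a := Nat.div_mul_cancel (Nat.gcd_dvd_left a m)
  have hga : g ≤ a := Nat.le_of_dvd ha (Nat.gcd_dvd_left a m)
  have hd0 : 0 < d := Nat.div_pos hga hg
  have haq : a • q = 0 := by rw [← hq]; exact addOrderOf_nsmul_eq_zero q
  -- the finite set of torsion elements, as a Finset in P
  set Tfin : Finset P :=
    Finset.univ.image (fun x : AddCommGroup.torsion G => ((x : G) : P)) with hT
  have hTcard : Tfin.card ≤ l := le_trans (Finset.card_image_le) (by simp [hl, Nat.card_eq_fintype_card])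
  have key : S.card ≤ (Tfin ×ˢ Finset.range g).card := by
    apply Finset.card_le_card_of_injOn (fun k => ((m * k) • q - (m * k₀) • q, k / d))
    · intro k hk
      rw [hS, Finset.mem_coe, Finset.mem_filter, Finset.mem_range] at hk
      obtain ⟨hka, hkG⟩ := hk
      have hk₀G : m • (p₂ + k₀ • q) ∈ G := (Finset.mem_filter.mp hk₀).2
      have hmemG : (m * k) • q - (m * k₀) • q ∈ G := by
        have : (m * k) • q - (m * k₀) • q
            = m • (p₂ + k • q) - m • (p₂ + k₀ • q) := by
          simp only [smul_add, mul_smul]; abel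
        rw [this]; exact sub_mem hkG hk₀G
      have htors : IsOfFinAddOrder (⟨_, hmemG⟩ : G) := by
        rw [isOfFinAddOrder_iff_nsmul_eq_zero]
        refine ⟨a, ha, ?_⟩
        ext
        show a • ((m * k) • q - (m * k₀) • q) = 0
        rw [smul_sub, smul_comm a (m*k) q, smul_comm a (m*k₀) q, haq]; simp
      rw [Finset.mem_coe, Finset.mem_product]
      constructor
      · rw [hT, Finset.mem_image]
        exact ⟨⟨⟨_, hmemG⟩, htors⟩, Finset.mem_univ _, rfl⟩
      · rw [Finset.mem_range]
        rw [Nat.div_lt_iff_lt_mul hd0, Nat.mul_comm g d, hdg]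
        exact hka
    · intro k hk k' hk' heq
      have h1 : (m * k) • q - (m * k₀) • q = (m * k') • q - (m * k₀) • q :=
        congrArg Prod.fst heq
      have h2 : k / d = k' / d := congrArg Prod.snd heq
      have h3 : (m * k) • q = (m * k') • q := by
        have := sub_left_injective h1; exact this
      -- deduce m*k ≡ m*k' [MOD a]
      have h4 : m * k ≡ m * k' [MOD a] := by
        rw [Nat.modEq_iff_dvd]
        have : ((↑(m * k') : ℤ) - (↑(m * k) : ℤ)) • q = 0 := by
          rw [sub_smul, natCast_zsmul, natCast_zsmul, h3, sub_self]
        rwa [← hq, addOrderOf_dvd_iff_zsmul_eq_zero]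
      have h5 : k ≡ k' [MOD d] := h4.cancel_left_div_gcd ha
      have h6 : k % d = k' % d := h5
      have h7 := Nat.div_add_mod k d
      have h8 := Nat.div_add_mod k' d
      rw [h2, h6] at h7
      omega
  calc S.card ≤ (Tfin ×ˢ Finset.range g).card := key
    _ = Tfin.card * g := by rw [Finset.card_product, Finset.card_range]
    _ ≤ l * g := Nat.mul_le_mul_right g hTcard
    _ ≤ m * l := by rw [Nat.mul_comm]; exact Nat.mul_le_mul_right l hgm

/-- Let `P` be an abelian group and `G` a subgroup whose torsion subgroup is finite of
order `l`. If for `A ∈ P` and a positive integer `a` there exist `p₁, p₂` with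
`a • p₁ = a • p₂ = A` and `p₁ - p₂` of order exactly `a`, then there exists `p` with
`a • p = A` and `m • p ∉ G` for every positive integer `m` with `m² * l < a`. -/
theorem stmt1 {P : Type*} [AddCommGroup P] (G : AddSubgroup P) (l : ℕ)
    (hfin : Finite (AddCommGroup.torsion G))
    (hl : Nat.card (AddCommGroup.torsion G) = l)
    (A : P) (a : ℕ) (ha : 0 < a)
    (h : ∃ p₁ p₂ : P, a • p₁ = A ∧ a • p₂ = A ∧ addOrderOf (p₁ - p₂) = a) :
    ∃ p : P, a • p = A ∧ ∀ m : ℕ, 0 < m → m ^ 2 * l < a → m • p ∉ G := by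
  classical
  obtain ⟨p₁, p₂, hp₁, hp₂, hq⟩ := h
  set q := p₁ - p₂ with hqdef
  have haq : a • q = 0 := by rw [← hq]; exact addOrderOf_nsmul_eq_zero q
  have hl0 : 0 < l := by
    rw [← hl]; exact Nat.card_pos
  have hEq : ∀ k : ℕ, a • (p₂ + k • q) = A := by
    intro k
    rw [smul_add, smul_comm a k q, haq, smul_zero, add_zero, hp₂]
  by_contra hcon
  push_neg at hcon
  -- each candidate is "bad"
  have hbad : ∀ k : ℕ, ∃ m : ℕ, 0 < m ∧ m ^ 2 * l < a ∧ m • (p₂ + k • q) ∈ G := by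
    intro k
    obtain ⟨m, hm1, hm2, hm3⟩ := hcon (p₂ + k • q) (hEq k)
    exact ⟨m, hm1, hm2, hm3⟩
  set M := Nat.sqrt ((a - 1) / l) with hM
  set T := (Finset.range (M + 1)).filter (fun m => 0 < m) with hT
  set S : ℕ → Finset ℕ :=
    fun m => (Finset.range a).filter (fun k => m • (p₂ + k • q) ∈ G) with hSdef
  have hsub : Finset.range a ⊆ T.biUnion S := by
    intro k hk
    obtain ⟨m, hm1, hm2, hm3⟩ := hbad k
    have hmM : m ≤ M := by
      rw [hM, Nat.le_sqrt']
      rw [Nat.le_div_iff_mul_le hl0]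
      omega
    refine Finset.mem_biUnion.mpr ⟨m, ?_, ?_⟩
    · rw [hT, Finset.mem_filter, Finset.mem_range]; exact ⟨by omega, hm1⟩
    · rw [hSdef]; exact Finset.mem_filter.mpr ⟨hk, hm3⟩
  have hcount : a ≤ ∑ m ∈ T, m * l := by
    calc a = (Finset.range a).card := (Finset.card_range a).symm
      _ ≤ (T.biUnion S).card := Finset.card_le_card hsub
      _ ≤ ∑ m ∈ T, (S m).card := Finset.card_biUnion_le
      _ ≤ ∑ m ∈ T, m * l := by
          apply Finset.sum_le_sum
          intro m hm
          rw [hT, Finset.mem_filter] at hm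
          rw [← hl]
          exact card_filter_le G q p₂ a ha hq m hm.2
  have hsum : ∑ m ∈ T, m * l ≤ M * M * l := by
    calc ∑ m ∈ T, m * l ≤ ∑ m ∈ Finset.range (M + 1), m * l := by
          apply Finset.sum_le_sum_of_subset
          rw [hT]; exact Finset.filter_subset _ _
      _ = (∑ m ∈ Finset.range (M + 1), m) * l := by rw [Finset.sum_mul]
      _ ≤ M * M * l := by
          apply Nat.mul_le_mul_right
          have h2 : (∑ i ∈ Finset.range (M + 1), i) * 2 = (M + 1) * M :=
            Finset.sum_range_id_mul_two (M + 1)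
          nlinarith [h2]
  have hMM : M * M * l ≤ a - 1 := by
    have h1 : M * M ≤ (a - 1) / l := by
      rw [hM]; exact Nat.sqrt_le _
    calc M * M * l ≤ ((a - 1) / l) * l := Nat.mul_le_mul_right l h1
      _ ≤ a - 1 := Nat.div_mul_le_self _ _
  omega
end

section
/- Let P be an abelian group (written additively) which is divisible (for every y ∈ P and every positive integer n there exists z ∈ P with n·z = y) and which contains, for every positive integer n, an element of order exactly n. Let G be a subgroup of P whose torsion subgroup is finite, of order l. Then for every A ∈ P and every positive integer a there exists p ∈ P with a·p = A and such that m·p ∉ G for every positive integer m with m²·l < a. -/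
/-- Let `P` be a divisible abelian group containing elements of every finite order, and
`G` a subgroup whose torsion subgroup is finite of order `l`. Then for every `A ∈ P` and
every positive integer `a` there exists `p` with `a • p = A` and `m • p ∉ G` for every
positive integer `m` with `m² * l < a`. -/
theorem stmt2 {P : Type*} [AddCommGroup P]
    (hdiv : ∀ (y : P) (n : ℕ), 0 < n → ∃ z : P, n • z = y)
    (htor : ∀ n : ℕ, 0 < n → ∃ x : P, addOrderOf x = n)
    (G : AddSubgroup P) (l : ℕ)
    (hfin : Finite (AddCommGroup.torsion G))
    (hl : Nat.card (AddCommGroup.torsion G) = l)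
    (A : P) (a : ℕ) (ha : 0 < a) :
    ∃ p : P, a • p = A ∧ ∀ m : ℕ, 0 < m → m ^ 2 * l < a → m • p ∉ G := by
  classical
  obtain ⟨x, hx⟩ := htor a ha
  obtain ⟨q, hq⟩ := hdiv A a ha
  have hxa : a • x = 0 := by rw [← hx]; exact addOrderOf_nsmul_eq_zero x
  set p : ℕ → P := fun i => q + i • x with hpdef
  have hpA : ∀ i, a • p i = A := by
    intro i
    simp only [hpdef, smul_add, hq, smul_comm a i x, hxa, smul_zero, add_zero]
  by_contra hcon
  push_neg at hcon
  have H : ∀ i : ℕ, ∃ m : ℕ, 0 < m ∧ m ^ 2 * l < a ∧ m • p i ∈ G :=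
    fun i => hcon (p i) (hpA i)
  choose m hm1 hm2 hm3 using H
  have hl1 : 1 ≤ l := by
    rw [← hl]
    exact Nat.one_le_iff_ne_zero.mpr (Nat.card_ne_zero.mpr ⟨⟨0⟩, hfin⟩)
  set M := Nat.sqrt ((a - 1) / l) with hM
  have hmM : ∀ i, m i ≤ M := by
    intro i
    rw [hM, Nat.le_sqrt, Nat.le_div_iff_mul_le hl1]
    have h2 := hm2 i
    have : m i ^ 2 * l ≤ a - 1 := Nat.le_sub_one_of_lt h2
    nlinarith [sq_nonneg (m i)]
  have hMl : M * M * l ≤ a - 1 := by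
    calc M * M * l ≤ ((a - 1) / l) * l := by
          exact Nat.mul_le_mul_right l (Nat.sqrt_le _)
      _ ≤ a - 1 := Nat.div_mul_le_self _ _
  -- base point for each value of m
  set b : ℕ → ℕ := fun m' => if h : ∃ j, m j = m' then h.choose else 0 with hbdef
  have hb : ∀ i, m (b (m i)) = m i := by
    intro i
    have h : ∃ j, m j = m i := ⟨i, rfl⟩
    simp only [hbdef, dif_pos h]
    exact h.choose_spec
  -- the torsion element attached to i
  set g : ℕ → P := fun i => m i • p i - m i • p (b (m i)) with hgdef
  have hgG : ∀ i, g i ∈ G := by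
    intro i
    refine sub_mem (hm3 i) ?_
    have := hm3 (b (m i))
    rwa [hb i] at this
  have hsm : ∀ i, a • (m i • p i) = m i • A := fun i => by
    rw [smul_comm, hpA]
  have hga : ∀ i, a • g i = 0 := by
    intro i
    have h2 : a • (m i • p (b (m i))) = m i • A := by
      rw [smul_comm, hpA]
    simp only [hgdef, smul_sub, hsm, h2, sub_self]
  have htorsion : ∀ i, (⟨g i, hgG i⟩ : G) ∈ AddCommGroup.torsion G := by
    intro i
    refine (AddCommGroup.mem_torsion _).mpr (isOfFinAddOrder_iff_nsmul_eq_zero.mpr ⟨a, ha, ?_⟩)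
    exact Subtype.ext (by simpa using hga i)
  set t : ℕ → AddCommGroup.torsion G := fun i => ⟨⟨g i, hgG i⟩, htorsion i⟩ with htdef
  have : Fintype (AddCommGroup.torsion G) := Fintype.ofFinite _
  set F : ℕ → ℕ × (AddCommGroup.torsion G) := fun i => (m i, t i) with hFdef
  set T : Finset (ℕ × (AddCommGroup.torsion G)) := Finset.Icc 1 M ×ˢ Finset.univ with hTdef
  -- key: if two indices share the same F-value, they are congruent mod a/gcd(a,m')
  have key : ∀ i j : ℕ, F i = F j → i % (a / Nat.gcd a (m i)) = j % (a / Nat.gcd a (m i)) := by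
    intro i j hF
    have hmij : m i = m j := (Prod.ext_iff.mp hF).1
    have htij : t i = t j := (Prod.ext_iff.mp hF).2
    have hgij : g i = g j := congrArg Subtype.val (congrArg Subtype.val htij)
    -- deduce m i • p i = m i • p j
    have hbij : b (m i) = b (m j) := by rw [hmij]
    have h1 : m i • p i = m i • p j := by
      have hg' : m i • p i - m i • p (b (m i)) = m i • p j - m i • p (b (m i)) := by
        have h0 := hgij
        rw [hgdef] at h0
        simp only at h0
        rw [← hmij] at h0
        exact h0
      exact sub_left_injective hg'
    -- turn into a divisibility statement
    have h2 : ((m i : ℤ) * (i : ℤ)) • x = ((m i : ℤ) * (j : ℤ)) • x := by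
      have hn : (m i * i) • x = (m i * j) • x := by
        have := h1
        simp only [hpdef, smul_add] at this
        have h3' : m i • (i • x) = m i • (j • x) := add_left_cancel this
        rwa [smul_smul, smul_smul] at h3'
      rw [← Int.natCast_mul, ← Int.natCast_mul, natCast_zsmul, natCast_zsmul]
      exact hn
    have h3 : ((m i : ℤ) * ((i : ℤ) - (j : ℤ))) • x = 0 := by
      rw [mul_sub, sub_smul, h2, sub_self]
    have h4 : (a : ℤ) ∣ (m i : ℤ) * ((i : ℤ) - (j : ℤ)) := by
      have := addOrderOf_dvd_iff_zsmul_eq_zero.mpr h3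
      rwa [hx] at this
    set d := Nat.gcd a (m i) with hddef
    have hd : 0 < d := Nat.gcd_pos_of_pos_left _ ha
    set k := a / d with hkdef
    have hka : k * d = a := Nat.div_mul_cancel (Nat.gcd_dvd_left a (m i))
    have hmd : d * (m i / d) = m i := Nat.mul_div_cancel' (Nat.gcd_dvd_right a (m i))
    have hcop : Nat.Coprime k (m i / d) := Nat.coprime_div_gcd_div_gcd hd
    have h5 : (k : ℤ) ∣ ((m i / d : ℕ) : ℤ) * ((i : ℤ) - (j : ℤ)) := by
      have h6 : ((d : ℤ) * k) ∣ (d : ℤ) * (((m i / d : ℕ) : ℤ) * ((i : ℤ) - (j : ℤ))) := by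
        have : ((d : ℤ) * k) = (a : ℤ) := by push_cast [← hka]; ring
        rw [this]
        have : (d : ℤ) * (((m i / d : ℕ) : ℤ) * ((i : ℤ) - (j : ℤ)))
            = (m i : ℤ) * ((i : ℤ) - (j : ℤ)) := by
          rw [← mul_assoc]
          norm_cast
          rw [hmd]
        rw [this]
        exact h4
      exact (mul_dvd_mul_iff_left (by exact_mod_cast hd.ne' : (d : ℤ) ≠ 0)).mp h6
    have h7 : (k : ℤ) ∣ ((i : ℤ) - (j : ℤ)) := by
      have hic : IsCoprime (k : ℤ) ((m i / d : ℕ) : ℤ) := Nat.isCoprime_iff_coprime.mpr hcop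
      exact hic.dvd_of_dvd_mul_left h5
    have h8 : Nat.ModEq k i j := by
      rw [Nat.modEq_iff_dvd]
      exact dvd_sub_comm.mp h7
    exact h8
  -- counting
  have hcount : (Finset.range a).card ≤ M * T.card := by
    apply Finset.card_le_mul_card_image_of_maps_to (f := F)
    · intro i _
      rw [hTdef]
      refine Finset.mem_product.mpr ⟨Finset.mem_Icc.mpr ⟨hm1 i, hmM i⟩, Finset.mem_univ _⟩
    · rintro ⟨m', t'⟩ hbT
      have hm'1 : 1 ≤ m' := (Finset.mem_Icc.mp (Finset.mem_product.mp hbT).1).1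
      have hm'M : m' ≤ M := (Finset.mem_Icc.mp (Finset.mem_product.mp hbT).1).2
      set d := Nat.gcd a m' with hddef
      have hdd : d ∣ a := Nat.gcd_dvd_left a m'
      have hdm : d ≤ m' := Nat.le_of_dvd hm'1 (Nat.gcd_dvd_right a m')
      set k := a / d with hkdef
      have hak : a / k = d := Nat.div_div_self hdd ha.ne'
      calc (Finset.filter (fun i => F i = (m', t')) (Finset.range a)).card
          ≤ (Finset.range d).card := by
            apply Finset.card_le_card_of_injOn (fun i => i / k)
            · intro i hi
              have hia : i < a := Finset.mem_range.mp (Finset.mem_filter.mp hi).1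
              rw [Finset.mem_coe, Finset.mem_range, ← hak]
              exact Nat.div_lt_div_of_lt_of_dvd (Nat.div_dvd_of_dvd hdd) hia
            · intro i hi j hj hij
              have hFi : F i = (m', t') := (Finset.mem_filter.mp hi).2
              have hFj : F j = (m', t') := (Finset.mem_filter.mp hj).2
              have hmi : m i = m' := (Prod.ext_iff.mp hFi).1
              have hmod := key i j (hFi.trans hFj.symm)
              rw [hmi, ← hddef, ← hkdef] at hmod
              dsimp only at hij
              calc i = k * (i / k) + i % k := (Nat.div_add_mod i k).symm
                _ = k * (j / k) + j % k := by rw [hij, hmod]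
                _ = j := Nat.div_add_mod j k
        _ = d := Finset.card_range d
        _ ≤ M := le_trans hdm hm'M
  have hT : T.card = M * l := by
    rw [hTdef, Finset.card_product, Nat.card_Icc, Finset.card_univ,
      ← Nat.card_eq_fintype_card, hl, Nat.add_sub_cancel]
  rw [Finset.card_range, hT, ← mul_assoc] at hcount
  have : a ≤ a - 1 := le_trans hcount hMl
  omega
end

section
/- Let G be a finitely generated subgroup of the multiplicative group ℂˣ of nonzero complex numbers; its torsion subgroup is finite, say of order l. Then for every u ∈ ℂˣ and every positive integer a there exists p ∈ ℂˣ with pᵃ = u and such that pᵐ ∉ G for every positive integer m with m²·l < a. -/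
private lemma aux_pow2 (x y : ℂˣ) (n t : ℕ) :
    (x ^ n * (y ^ n)⁻¹) ^ t = x ^ (n * t) * (y ^ (n * t))⁻¹ := by
  rw [mul_pow, inv_pow, ← pow_mul, ← pow_mul]

/-- Let `G` be a finitely generated subgroup of `ℂˣ`, with finite torsion subgroup of
order `l`. Then for every `u ∈ ℂˣ` and positive integer `a` there exists `p ∈ ℂˣ` with
`p ^ a = u` and `p ^ m ∉ G` for every positive integer `m` with `m² * l < a`. -/
theorem stmt3 (G : Subgroup ℂˣ) (hG : G.FG) (l : ℕ)
    (hl : Nat.card (CommGroup.torsion G) = l)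
    (u : ℂˣ) (a : ℕ) (ha : 0 < a) :
    ∃ p : ℂˣ, p ^ a = u ∧ ∀ m : ℕ, 0 < m → m ^ 2 * l < a → p ^ m ∉ G := by
  classical
  -- Step 1: the torsion subgroup of `G` is finite, hence `l > 0`.
  haveI hGfg : Group.FG ↥G := (Group.fg_iff_subgroup_fg G).mpr hG
  haveI hMF : Module.Finite ℤ (Additive ↥G) :=
    Module.Finite.iff_addGroup_fg.mpr <| AddGroup.fg_iff_addMonoid_fg.mpr <|
      Monoid.fg_iff_add_fg.mp <| Group.fg_iff_monoid_fg.mp hGfg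
  have hTfg : (CommGroup.torsion ↥G).FG := by
    rw [Subgroup.fg_iff_add_fg, ← AddSubgroup.toIntSubmodule_toAddSubgroup
        ((CommGroup.torsion ↥G).toAddSubgroup), ← Submodule.fg_iff_addSubgroup_fg]
    exact IsNoetherian.noetherian _
  haveI : Group.FG ↥(CommGroup.torsion ↥G) := (Group.fg_iff_subgroup_fg _).mpr hTfg
  have htor : Monoid.IsTorsion ↥(CommGroup.torsion ↥G) := by
    intro x
    obtain ⟨n, hn, hxn⟩ := isOfFinOrder_iff_pow_eq_one.mp
      ((CommGroup.mem_torsion _).mp x.2)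
    exact isOfFinOrder_iff_pow_eq_one.mpr
      ⟨n, hn, Subtype.ext (by rw [SubmonoidClass.coe_pow]; exact_mod_cast hxn)⟩
  haveI hfin : Finite ↥(CommGroup.torsion ↥G) := CommGroup.finite_of_fg_torsion _ htor
  have hl0 : 0 < l := hl ▸ Nat.card_pos
  -- Step 2: elements of `G` killed by `a` are killed by `l`.
  have key : ∀ w : ℂˣ, w ∈ G → w ^ a = 1 → w ^ l = 1 := by
    intro w hw hwa
    have hwG : IsOfFinOrder (⟨w, hw⟩ : ↥G) :=
      isOfFinOrder_iff_pow_eq_one.mpr ⟨a, ha, Subtype.ext (by simpa using hwa)⟩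
    have h1 : (⟨⟨w, hw⟩, (CommGroup.mem_torsion _).mpr hwG⟩ :
        CommGroup.torsion ↥G) ^ l = 1 := by
      rw [← hl]; exact pow_card_eq_one'
    have h2 := congrArg (fun t : CommGroup.torsion ↥G => ((t : ↥G) : ℂˣ)) h1
    simpa using h2
  -- Step 3: an `a`-th root `p₀` of `u` and a primitive `a`-th root of unity `ζ`.
  have hune : (u : ℂ) ≠ 0 := u.ne_zero
  have haC : (a : ℂ) ≠ 0 := Nat.cast_ne_zero.mpr ha.ne'
  set z : ℂ := Complex.exp (Complex.log u / a) with hzdef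
  have hz : z ^ a = (u : ℂ) := by
    rw [hzdef, ← Complex.exp_nat_mul, mul_div_cancel₀ _ haC, Complex.exp_log hune]
  set p₀ : ℂˣ := Units.mk0 z (Complex.exp_ne_zero _) with hp₀def
  have hp₀ : p₀ ^ a = u := Units.ext (by
    rw [Units.val_pow_eq_pow_val]; exact hz)
  obtain hζ := Complex.isPrimitiveRoot_exp a ha.ne'
  set ζ : ℂ := Complex.exp (2 * Real.pi * Complex.I / a) with hζdef
  set ζu : ℂˣ := Units.mk0 ζ (Complex.exp_ne_zero _) with hζudef
  have hζuv : ∀ t : ℕ, ((ζu ^ t : ℂˣ) : ℂ) = ζ ^ t := by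
    intro t; rw [Units.val_pow_eq_pow_val]; rfl
  have hζua : ζu ^ a = 1 := Units.ext (by
    rw [hζuv]; exact hζ.pow_eq_one)
  -- Step 4: by contradiction.
  by_contra hcon
  push_neg at hcon
  set r : ℕ → ℂˣ := fun k => p₀ * ζu ^ k with hrdef
  have hr : ∀ k, r k ^ a = u := by
    intro k
    show (p₀ * ζu ^ k) ^ a = u
    rw [mul_pow, hp₀, ← pow_mul, mul_comm k a, pow_mul, hζua, one_pow, mul_one]
  choose m hm1 hm2 hm3 using fun k : Fin a => hcon (r k) (hr k)
  set S : Finset ℕ := (Finset.range a).filter (fun n => 0 < n ∧ n ^ 2 * l < a) with hSdef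
  have hmS : ∀ k : Fin a, m k ∈ S := by
    intro k
    have h1 := hm1 k
    have h2 := hm2 k
    have hlt : m k < a := by nlinarith
    exact Finset.mem_filter.mpr ⟨Finset.mem_range.mpr hlt, h1, h2⟩
  -- fiber bound: at most `n * l` roots use the exponent `n`
  have fib : ∀ n ∈ S, (Finset.univ.filter (fun k : Fin a => m k = n)).card ≤ n * l := by
    intro n hn
    obtain ⟨-, hn1, -⟩ := Finset.mem_filter.mp hn
    set F : Finset (Fin a) := Finset.univ.filter (fun k : Fin a => m k = n) with hFdef
    rcases F.eq_empty_or_nonempty with he | ⟨k₀, hk₀⟩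
    · rw [he]; simp
    · have hcong : ∀ k ∈ F, ζ ^ ((k : ℕ) * (n * l)) = ζ ^ ((k₀ : ℕ) * (n * l)) := by
        intro k hk
        have hkn : m k = n := (Finset.mem_filter.mp hk).2
        have hk₀n : m k₀ = n := (Finset.mem_filter.mp hk₀).2
        have h1 : r k ^ n ∈ G := hkn ▸ hm3 k
        have h2 : r (k₀ : ℕ) ^ n ∈ G := hk₀n ▸ hm3 k₀
        set w : ℂˣ := r k ^ n * (r (k₀ : ℕ) ^ n)⁻¹ with hwdef
        have hwG : w ∈ G := G.mul_mem h1 (G.inv_mem h2)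
        have hwa : w ^ a = 1 := by
          rw [hwdef, aux_pow2, mul_comm n a, pow_mul, pow_mul, hr, hr, mul_inv_cancel]
        have hwl : w ^ l = 1 := key w hwG hwa
        have h3 : r (k : ℕ) ^ (n * l) = r (k₀ : ℕ) ^ (n * l) := by
          have e : (r (k : ℕ) ^ (n * l)) * (r (k₀ : ℕ) ^ (n * l))⁻¹ = w ^ l := by
            rw [hwdef, aux_pow2]
          exact mul_inv_eq_one.mp (e.trans hwl)
        have h4 : ζu ^ ((k : ℕ) * (n * l)) = ζu ^ ((k₀ : ℕ) * (n * l)) := by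
          have h5 : (p₀ * ζu ^ (k : ℕ)) ^ (n * l) = (p₀ * ζu ^ (k₀ : ℕ)) ^ (n * l) := h3
          rw [mul_pow, mul_pow, ← pow_mul, ← pow_mul] at h5
          exact mul_left_cancel h5
        have := congrArg (Units.val) h4
        rwa [hζuv, hζuv] at this
      have hnl : 0 < n * l := Nat.mul_pos hn1 hl0
      have hmaps : ∀ k ∈ F, ζ ^ (k : ℕ) ∈
          (Polynomial.nthRoots (n * l) (ζ ^ ((k₀ : ℕ) * (n * l)))).toFinset := by
        intro k hk
        rw [Multiset.mem_toFinset, Polynomial.mem_nthRoots hnl, ← pow_mul]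
        exact hcong k hk
      have hinj : Set.InjOn (fun k : Fin a => ζ ^ (k : ℕ)) F := by
        intro i _ j _ hij
        exact Fin.ext (hζ.pow_inj i.2 j.2 hij)
      calc F.card ≤ (Polynomial.nthRoots (n * l) (ζ ^ ((k₀ : ℕ) * (n * l)))).toFinset.card :=
            Finset.card_le_card_of_injOn _ hmaps hinj
        _ ≤ Multiset.card (Polynomial.nthRoots (n * l) (ζ ^ ((k₀ : ℕ) * (n * l)))) :=
            Multiset.toFinset_card_le _
        _ ≤ n * l := Polynomial.card_nthRoots _ _
  -- counting
  have htotal : a ≤ ∑ n ∈ S, n * l := by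
    have hcount := Finset.card_eq_sum_card_fiberwise (fun k (_ : k ∈ Finset.univ) => hmS k)
    calc a = (Finset.univ : Finset (Fin a)).card := by simp
      _ = ∑ n ∈ S, (Finset.univ.filter (fun k : Fin a => m k = n)).card := hcount
      _ ≤ ∑ n ∈ S, n * l := Finset.sum_le_sum fib
  have hSne : S.Nonempty := ⟨m ⟨0, ha⟩, hmS _⟩
  set M := S.max' hSne with hMdef
  obtain ⟨-, hM1, hM2⟩ := Finset.mem_filter.mp (S.max'_mem hSne)
  have hS_sub : S ⊆ Finset.range (M + 1) := by
    intro n hn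
    exact Finset.mem_range.mpr (Nat.lt_succ_of_le (S.le_max' n hn))
  have hsum1 : ∑ n ∈ S, n * l ≤ ∑ n ∈ Finset.range (M + 1), n * l :=
    Finset.sum_le_sum_of_subset hS_sub
  have hsum2 : (∑ n ∈ Finset.range (M + 1), n) * 2 = (M + 1) * M := by
    simpa using Finset.sum_range_id_mul_two (M + 1)
  have hsum3 : ∑ n ∈ Finset.range (M + 1), n * l = (∑ n ∈ Finset.range (M + 1), n) * l := by
    rw [Finset.sum_mul]
  have hM2' : M * M * l < a := by rw [← pow_two]; exact hM2
  have e1 : a ≤ (∑ n ∈ Finset.range (M + 1), n) * l :=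
    le_trans htotal (by rw [← hsum3]; exact hsum1)
  have e2 : 2 * a ≤ (M + 1) * M * l := by
    calc 2 * a ≤ 2 * ((∑ n ∈ Finset.range (M + 1), n) * l) := by omega
      _ = ((∑ n ∈ Finset.range (M + 1), n) * 2) * l := by ring
      _ = (M + 1) * M * l := by rw [hsum2]
  have e3 : M * l ≤ M * M * l := by
    have := Nat.le_mul_of_pos_left (M * l) hM1
    nlinarith
  nlinarith [e2, e3, hM2']
end

section
/- Let P be the abelian group ℤ × ℂˣ (addition in the first factor, multiplication in the second). Let G be a finitely generated subgroup of P; its torsion subgroup is finite, say of order l. Then for every u ∈ ℂˣ and every positive integer a there exists v ∈ ℂˣ such that the element p = (1, v) satisfies a·p = (a, u) (i.e. vᵃ = u) and such that m·p = (m, vᵐ) ∉ G for every positive integer m with m²·l < a. -/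
open Finset

lemma torsion_finite_of_fg' {A : Type*} [AddCommGroup A] [AddGroup.FG A] :
    Finite (AddCommGroup.torsion A) := by
  have h1 : Module.Finite ℤ A := Module.Finite.iff_addGroup_fg.mpr ‹_›
  have h3 : (AddSubgroup.toIntSubmodule (AddCommGroup.torsion A)).FG :=
    IsNoetherian.noetherian _
  have h4 : AddGroup.FG (AddCommGroup.torsion A) := by
    rw [AddGroup.fg_iff_addSubgroup_fg]
    rwa [Submodule.fg_iff_addSubgroup_fg] at h3
  exact AddCommGroup.finite_of_fg_torsion _ (fun x => by
    have := x.2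
    rw [AddCommGroup.mem_torsion] at this
    rwa [AddSubmonoid.isOfFinAddOrder_coe (x := x)] at this)

/-- Let `P = ℤ × ℂˣ` (additively the first factor, multiplicatively the second), and let
`G` be a finitely generated subgroup of `P`, with torsion subgroup of order `l`. Then for
every `u ∈ ℂˣ` and positive integer `a` there exists `v ∈ ℂˣ` such that `p = (1, v)`
satisfies `a • p = (a, u)` (i.e. `v ^ a = u`) and `m • p = (m, v ^ m) ∉ G` for every
positive integer `m` with `m² * l < a`. -/
theorem stmt4 (G : AddSubgroup (ℤ × Additive ℂˣ)) (hG : G.FG) (l : ℕ)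
    (hl : Nat.card (AddCommGroup.torsion G) = l)
    (u : ℂˣ) (a : ℕ) (ha : 0 < a) :
    ∃ v : ℂˣ,
      a • (((1 : ℤ), Additive.ofMul v) : ℤ × Additive ℂˣ)
        = ((a : ℤ), Additive.ofMul u) ∧
      ∀ m : ℕ, 0 < m → m ^ 2 * l < a →
        m • (((1 : ℤ), Additive.ofMul v) : ℤ × Additive ℂˣ) ∉ G := by
  classical
  have hGfg : AddGroup.FG ↥G := (AddGroup.fg_iff_addSubgroup_fg G).mpr hG
  have hfin : Finite (AddCommGroup.torsion ↥G) := torsion_finite_of_fg'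
  have := Fintype.ofFinite (AddCommGroup.torsion ↥G)
  have hl1 : 1 ≤ l := by
    rw [← hl]
    exact Nat.one_le_iff_ne_zero.mpr (Nat.card_ne_zero.mpr ⟨inferInstance, hfin⟩)
  -- root of u
  obtain ⟨z, hz⟩ := IsAlgClosed.exists_pow_nat_eq ((u : ℂ)) ha
  have hz0 : z ≠ 0 := by
    intro h; rw [h, zero_pow ha.ne'] at hz; exact u.ne_zero hz.symm
  set v₀ : ℂˣ := Units.mk0 z hz0 with hv₀def
  have hv₀ : v₀ ^ a = u := by ext; simpa [hv₀def] using hz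
  -- primitive root
  have hζ' := Complex.isPrimitiveRoot_exp a ha.ne'
  set ζ : ℂˣ := (hζ'.isUnit ha.ne').unit with hζdef
  have hζ : IsPrimitiveRoot ζ a := hζ'.isUnit_unit ha.ne'
  have hord : orderOf ζ = a := hζ.eq_orderOf.symm
  set vk : ℕ → ℂˣ := fun k => v₀ * ζ ^ k with hvkdef
  have hζa : ∀ k, (ζ ^ k) ^ a = 1 := fun k => by
    rw [← pow_mul, mul_comm, pow_mul, hζ.pow_eq_one, one_pow]
  have hvka : ∀ k, (vk k) ^ a = u := by
    intro k
    show (v₀ * ζ ^ k) ^ a = u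
    rw [mul_pow, hv₀, hζa, mul_one]
  set g : ℕ → ℕ → ℤ × Additive ℂˣ :=
    fun m k => (((m : ℕ) : ℤ), Additive.ofMul ((vk k) ^ m)) with hgdef
  have hag : ∀ m k, a • g m k = (((a * m : ℕ) : ℤ), Additive.ofMul (u ^ m)) := by
    intro m k
    rw [hgdef]
    have h1 : (vk k ^ m) ^ a = u ^ m := by
      rw [← pow_mul, mul_comm m a, pow_mul, hvka]
    simp only [Prod.smul_mk, nsmul_eq_mul, ← ofMul_pow, h1]
    push_cast; ring_nf
  have key : ∃ k ∈ Finset.range a, ∀ m : ℕ, 0 < m → m ^ 2 * l < a → g m k ∉ G := by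
    by_contra hcon
    push_neg at hcon
    set S : Finset ℕ := (Finset.range a).filter (fun m => 0 < m ∧ m ^ 2 * l < a) with hSdef
    set bad : ℕ → Finset ℕ :=
      fun m => (Finset.range a).filter (fun k => g m k ∈ G) with hbaddef
    have hsub : Finset.range a ⊆ S.biUnion bad := by
      intro k hk
      obtain ⟨m, hm0, hma, hmG⟩ := hcon k hk
      have hmlt : m < a := by
        have h1 : m ≤ m ^ 2 := Nat.le_self_pow two_ne_zero m
        have h2 : m ^ 2 ≤ m ^ 2 * l := Nat.le_mul_of_pos_right _ hl1
        omega
      exact Finset.mem_biUnion.mpr ⟨m,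
        Finset.mem_filter.mpr ⟨Finset.mem_range.mpr hmlt, hm0, hma⟩,
        Finset.mem_filter.mpr ⟨hk, hmG⟩⟩
    have hcard : a ≤ ∑ m ∈ S, (bad m).card := by
      calc a = (Finset.range a).card := (Finset.card_range a).symm
        _ ≤ (S.biUnion bad).card := Finset.card_le_card hsub
        _ ≤ ∑ m ∈ S, (bad m).card := Finset.card_biUnion_le
    -- bound each bad m
    have hbound : ∀ m ∈ S, (bad m).card ≤ l * m := by
      intro m hmS
      obtain ⟨hmr, hm0, hma⟩ := Finset.mem_filter.mp hmS
      rcases (bad m).eq_empty_or_nonempty with hbe | hbne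
      · simp [hbe]
      set k₀ := (bad m).min' hbne with hk₀def
      have hk₀ : k₀ ∈ bad m := (bad m).min'_mem hbne
      have hk₀G : g m k₀ ∈ G := (Finset.mem_filter.mp hk₀).2
      -- the map to torsion × range m
      have helt : ∀ k, k ∈ bad m → (g m k - g m k₀ ∈ G ∧
          IsOfFinAddOrder (g m k - g m k₀)) := by
        intro k hk
        refine ⟨G.sub_mem (Finset.mem_filter.mp hk).2 hk₀G, ?_⟩
        rw [isOfFinAddOrder_iff_nsmul_eq_zero]
        exact ⟨a, ha, by rw [nsmul_sub, hag, hag, sub_self]⟩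
      set F : ℕ → (AddCommGroup.torsion ↥G) × ℕ :=
        fun k => (if h : k ∈ bad m then
            (⟨⟨g m k - g m k₀, (helt k h).1⟩, by
              rw [AddCommGroup.mem_torsion]
              exact AddSubmonoid.isOfFinAddOrder_coe.mp (helt k h).2⟩ :
              AddCommGroup.torsion ↥G)
          else 0, k * m / a) with hFdef
      have hmaps : ∀ k ∈ bad m, F k ∈ Finset.univ ×ˢ Finset.range m := by
        intro k hk
        refine Finset.mem_product.mpr ⟨Finset.mem_univ _, Finset.mem_range.mpr ?_⟩
        have hka : k < a := Finset.mem_range.mp (Finset.mem_filter.mp hk).1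
        rw [Nat.div_lt_iff_lt_mul ha]
        calc k * m < a * m := (Nat.mul_lt_mul_right hm0).mpr hka
          _ = m * a := mul_comm _ _
      have hinj : Set.InjOn F (bad m) := by
        intro k hk k' hk' hFeq
        rw [Finset.mem_coe] at hk hk'
        simp only [hFdef, dif_pos hk, dif_pos hk', Prod.mk.injEq] at hFeq
        obtain ⟨h1, h2⟩ := hFeq
        have hgeq : g m k = g m k' := by
          have := congrArg
            (fun x : AddCommGroup.torsion ↥G => ((x : ↥G) : ℤ × Additive ℂˣ)) h1
          simpa [sub_left_inj] using this
        -- extract ζ ^ (k*m) = ζ ^ (k'*m)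
        have hz2 : (vk k) ^ m = (vk k') ^ m := by
          have := congrArg Prod.snd hgeq
          have h' : Additive.ofMul (vk k ^ m) = Additive.ofMul (vk k' ^ m) := by
            simpa [hgdef] using this
          exact Additive.ofMul.injective h'
        have hz3 : ζ ^ (k * m) = ζ ^ (k' * m) := by
          have := hz2
          rw [hvkdef] at this
          simp only [mul_pow, ← pow_mul] at this
          exact mul_left_cancel this
        have hmod : k * m ≡ k' * m [MOD a] := by
          rw [← hord]
          exact pow_eq_pow_iff_modEq.mp hz3
        have haux : ∀ x y : ℕ, x ≤ y → x ≡ y [MOD a] → x / a = y / a → x = y := by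
          intro x y hxy hm hd
          obtain ⟨t, ht⟩ := (Nat.modEq_iff_dvd' hxy).mp hm
          have hy : y = x + a * t := by omega
          subst hy
          rw [Nat.add_mul_div_left _ _ ha] at hd
          have ht0 : t = 0 := by omega
          rw [ht0, mul_zero, add_zero]
        have hkk : k * m = k' * m := by
          rcases le_total (k * m) (k' * m) with hle | hle
          · exact haux _ _ hle hmod h2
          · exact (haux _ _ hle hmod.symm h2.symm).symm
        exact Nat.eq_of_mul_eq_mul_right hm0 hkk
      calc (bad m).card ≤ (Finset.univ ×ˢ Finset.range m).card :=
            Finset.card_le_card_of_injOn F hmaps hinj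
        _ = l * m := by
            rw [Finset.card_product, Finset.card_univ, Finset.card_range,
              ← Nat.card_eq_fintype_card, hl]
    -- sum bound
    rcases S.eq_empty_or_nonempty with hSe | hSne
    · rw [hSe] at hcard; simp at hcard; omega
    set M := S.max' hSne with hMdef
    have hM : M ∈ S := S.max'_mem hSne
    obtain ⟨hMr, hM0, hMa⟩ := Finset.mem_filter.mp hM
    have hsum : ∑ m ∈ S, (bad m).card ≤ S.card * (l * M) := by
      calc ∑ m ∈ S, (bad m).card ≤ ∑ m ∈ S, l * M := by
            refine Finset.sum_le_sum (fun m hm => ?_)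
            exact (hbound m hm).trans
              (Nat.mul_le_mul_left l (S.le_max' m hm))
        _ = S.card * (l * M) := by rw [Finset.sum_const, smul_eq_mul]
    have hScard : S.card ≤ M := by
      have hsub2 : S ⊆ Finset.Icc 1 M := by
        intro m hm
        obtain ⟨_, hm0, _⟩ := Finset.mem_filter.mp hm
        exact Finset.mem_Icc.mpr ⟨hm0, S.le_max' m hm⟩
      calc S.card ≤ (Finset.Icc 1 M).card := Finset.card_le_card hsub2
        _ = M := by rw [Nat.card_Icc]; omega
    have : a ≤ M * (l * M) := le_trans (le_trans hcard hsum)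
      (Nat.mul_le_mul_right _ hScard)
    have hMlM : M * (l * M) = M ^ 2 * l := by ring
    omega
  obtain ⟨k, hkr, hk⟩ := key
  refine ⟨vk k, ?_, ?_⟩
  · simp only [Prod.smul_mk, nsmul_eq_mul, mul_one, ← ofMul_pow, hvka]
  · intro m hm0 hma
    have heq : m • (((1 : ℤ), Additive.ofMul (vk k)) : ℤ × Additive ℂˣ) = g m k := by
      rw [hgdef]
      simp only [Prod.smul_mk, nsmul_eq_mul, mul_one, ← ofMul_pow]
    rw [heq]
    exact hk m hm0 hma
end

section
/- Let T = (ℝ/ℤ) × (ℝ/ℤ) be the product of two copies of the additive circle ℝ/ℤ. Let G be a finitely generated subgroup of T; its torsion subgroup is finite, say of order l. Then for every x ∈ T and every positive integer a there exists p ∈ T with a·p = x and such that m·p ∉ G for every positive integer m with m²·l < a. -/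
private lemma nat_recover {k j1 j2 : ℕ}
    (hmod : (k:ℤ) ∣ (j1:ℤ) - (j2:ℤ)) (hdiv : j1 / k = j2 / k) : j1 = j2 := by
  have h1 : (j1:ℤ) % k = (j2:ℤ) % k := Int.ModEq.symm (Int.modEq_iff_dvd.mpr hmod)
  have h2 : j1 % k = j2 % k := by
    rw [← Int.natCast_mod, ← Int.natCast_mod] at h1
    exact_mod_cast h1
  calc j1 = k * (j1 / k) + j1 % k := (Nat.div_add_mod j1 k).symm
    _ = k * (j2 / k) + j2 % k := by rw [hdiv, h2]
    _ = j2 := Nat.div_add_mod j2 k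

private lemma div_dvd_cancel {a m : ℕ} (hm : 0 < m) {j1 j2 : ℕ}
    (h : (a:ℤ) ∣ (m:ℤ) * ((j1:ℤ) - (j2:ℤ))) :
    ((a / Nat.gcd m a : ℕ) : ℤ) ∣ (j1:ℤ) - (j2:ℤ) := by
  set d := Nat.gcd m a with hd
  have hdpos : 0 < d := Nat.gcd_pos_of_pos_left a hm
  have hda : d ∣ a := Nat.gcd_dvd_right m a
  have hdm : d ∣ m := Nat.gcd_dvd_left m a
  set k := a / d with hk
  set m' := m / d with hm'
  have hcop : Nat.Coprime m' k := Nat.coprime_div_gcd_div_gcd hdpos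
  have haz : (a:ℤ) = (d:ℤ) * k := by exact_mod_cast (Nat.mul_div_cancel' hda).symm
  have hmz : (m:ℤ) = (d:ℤ) * m' := by exact_mod_cast (Nat.mul_div_cancel' hdm).symm
  rw [haz, hmz, mul_assoc] at h
  have h3 : (k:ℤ) ∣ (m':ℤ) * ((j1:ℤ) - j2) :=
    (mul_dvd_mul_iff_left (by exact_mod_cast hdpos.ne' : (d:ℤ) ≠ 0)).mp h
  exact (Nat.isCoprime_iff_coprime.mpr hcop.symm).dvd_of_dvd_mul_left h3

private lemma circle_eq_imp {a m j1 j2 : ℕ} (ha : 0 < a)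
    (h : ((((m*j1 : ℕ):ℝ)/a : ℝ) : AddCircle (1:ℝ)) = ↑(((m*j2:ℕ):ℝ)/a)) :
    (a:ℤ) ∣ (m:ℤ) * ((j1:ℤ) - (j2:ℤ)) := by
  rw [QuotientAddGroup.eq_iff_sub_mem] at h
  obtain ⟨z, hz⟩ := h
  have hz' : (z:ℝ) = ((m*j1 : ℕ):ℝ)/a - ((m*j2:ℕ):ℝ)/a := by simpa using hz
  have haR : (a:ℝ) ≠ 0 := by positivity
  have hr : ((m*j1 : ℕ):ℝ) - ((m*j2:ℕ):ℝ) = z * a := by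
    field_simp at hz'
    push_cast at hz' ⊢
    linarith
  have hzZ : ((m*j1 : ℕ):ℤ) - ((m*j2:ℕ):ℤ) = z * a := by exact_mod_cast hr
  exact ⟨z, by push_cast at hzZ ⊢; linarith⟩

/-- Let `T = (ℝ/ℤ) × (ℝ/ℤ)` and let `G` be a finitely generated subgroup of `T`, with
torsion subgroup of order `l`. Then for every `x ∈ T` and positive integer `a` there
exists `p ∈ T` with `a • p = x` and `m • p ∉ G` for every positive integer `m` with
`m² * l < a`. -/
theorem stmt5 (G : AddSubgroup (AddCircle (1 : ℝ) × AddCircle (1 : ℝ))) (hG : G.FG)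
    (l : ℕ) (hl : Nat.card (AddCommGroup.torsion G) = l)
    (x : AddCircle (1 : ℝ) × AddCircle (1 : ℝ)) (a : ℕ) (ha : 0 < a) :
    ∃ p : AddCircle (1 : ℝ) × AddCircle (1 : ℝ),
      a • p = x ∧ ∀ m : ℕ, 0 < m → m ^ 2 * l < a → m • p ∉ G := by
  classical
  -- finiteness of the torsion subgroup
  have hfin : Finite ↥(AddCommGroup.torsion ↥G) := by
    have hfg : AddGroup.FG ↥G := (AddGroup.fg_iff_addSubgroup_fg G).mpr hG
    have : Module.Finite ℤ ↥G := Module.Finite.iff_addGroup_fg.mpr hfg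
    have hN : IsNoetherian ℤ ↥G := isNoetherian_of_isNoetherianRing_of_finite ℤ ↥G
    have hfg2 : (AddCommGroup.torsion ↥G).FG := by
      have := hN.noetherian ((AddCommGroup.torsion ↥G).toIntSubmodule)
      rwa [Submodule.fg_iff_addSubgroup_fg, AddSubgroup.toIntSubmodule_toAddSubgroup] at this
    have hfg3 : AddGroup.FG ↥(AddCommGroup.torsion ↥G) :=
      (AddGroup.fg_iff_addSubgroup_fg _).mpr hfg2
    refine AddCommGroup.finite_of_fg_torsion _ ?_
    rintro ⟨g, hg⟩
    rw [isOfFinAddOrder_iff_nsmul_eq_zero]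
    obtain ⟨n, hn, hn0⟩ :=
      isOfFinAddOrder_iff_nsmul_eq_zero.mp ((AddCommGroup.mem_torsion g).mp hg)
    exact ⟨n, hn, Subtype.ext (by push_cast; exact hn0)⟩
  have hl1 : 1 ≤ l := hl ▸ Nat.card_pos
  -- a point q with a • q = x
  obtain ⟨r1, hr1⟩ := QuotientAddGroup.mk_surjective x.1
  obtain ⟨r2, hr2⟩ := QuotientAddGroup.mk_surjective x.2
  have haR : (a:ℝ) ≠ 0 := by positivity
  set q : AddCircle (1 : ℝ) × AddCircle (1 : ℝ) := (↑(r1 / a), ↑(r2 / a)) with hq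
  have hdiv : ∀ r : ℝ, a • ((r / a : ℝ) : AddCircle (1:ℝ)) = ↑r := by
    intro r
    show ((a • (r/a) : ℝ) : AddCircle (1:ℝ)) = ↑r
    congr 1
    rw [nsmul_eq_mul]
    field_simp
  have haq : a • q = x := by
    have : a • q = (a • (↑(r1/a) : AddCircle (1:ℝ)), a • (↑(r2/a) : AddCircle (1:ℝ))) := rfl
    rw [this, hdiv, hdiv, hr1, hr2]
  -- torsion translations
  set c : ℕ → AddCircle (1 : ℝ) × AddCircle (1 : ℝ) :=
    fun j => ((((j:ℝ)/a : ℝ) : AddCircle (1:ℝ)), 0) with hc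
  have hmc : ∀ m j : ℕ, m • c j = (((((m*j:ℕ):ℝ)/a : ℝ) : AddCircle (1:ℝ)), 0) := by
    intro m j
    have h1 : m • c j = (m • ((((j:ℝ)/a : ℝ)) : AddCircle (1:ℝ)), m • (0 : AddCircle (1:ℝ))) := rfl
    rw [h1, smul_zero]
    congr 1
    show ((m • ((j:ℝ)/a) : ℝ) : AddCircle (1:ℝ)) = _
    congr 1
    push_cast
    ring
  have hnatzero : ∀ n : ℕ, (((n:ℕ):ℝ) : AddCircle (1:ℝ)) = 0 := by
    intro n
    simp
    exact ⟨n, by simp⟩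
  have hac : ∀ j : ℕ, a • c j = 0 := by
    intro j
    rw [hmc]
    have h2 : (((a*j:ℕ):ℝ)/a : ℝ) = ((j:ℕ):ℝ) := by
      push_cast
      field_simp
    rw [h2, hnatzero]
    rfl
  -- the finite set K of a-torsion points of G
  set K : Set (AddCircle (1 : ℝ) × AddCircle (1 : ℝ)) := {g | g ∈ G ∧ a • g = 0} with hK
  have hKemb : ∀ g : ↥K, ((⟨g.1, g.2.1⟩ : ↥G) ∈ AddCommGroup.torsion ↥G) := by
    rintro ⟨g, hg, hg0⟩
    rw [AddCommGroup.mem_torsion, isOfFinAddOrder_iff_nsmul_eq_zero]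
    exact ⟨a, ha, Subtype.ext (by push_cast; exact hg0)⟩
  have hinj : Function.Injective
      (fun g : ↥K => (⟨⟨g.1, g.2.1⟩, hKemb g⟩ : ↥(AddCommGroup.torsion ↥G))) := by
    intro g h e
    apply Subtype.ext
    exact congrArg (fun t => (t.1 : AddCircle (1 : ℝ) × AddCircle (1 : ℝ))) e
  have hKfin : K.Finite := Set.finite_coe_iff.mp (Finite.of_injective _ hinj)
  have hKcard : Nat.card ↥K ≤ l := hl ▸ Nat.card_le_card_of_injective _ hinj
  -- the bad sets
  have hBm : ∀ m : ℕ, 0 < m →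
      ((Finset.range a).filter (fun j => m • (q + c j) ∈ G)).card ≤ l * m := by
    intro m hm
    set Bm := (Finset.range a).filter (fun j => m • (q + c j) ∈ G) with hBmdef
    rcases Bm.eq_empty_or_nonempty with he | ⟨j0, hj0⟩
    · simp [he]
    set θ : ℕ → AddCircle (1 : ℝ) × AddCircle (1 : ℝ) :=
      fun j => m • c j - m • c j0 with hθ
    have key : ∀ j1 j2 : ℕ, θ j1 = θ j2 → (a:ℤ) ∣ (m:ℤ) * ((j1:ℤ) - (j2:ℤ)) := by
      intro j1 j2 he
      have h1 : m • c j1 = m • c j2 := by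
        have := sub_left_injective he
        exact this
      rw [hmc, hmc] at h1
      exact circle_eq_imp ha (congrArg Prod.fst h1)
    have himg : ∀ j ∈ Bm, θ j ∈ K := by
      intro j hj
      constructor
      · have hgj : m • (q + c j) ∈ G := (Finset.mem_filter.mp hj).2
        have hgj0 : m • (q + c j0) ∈ G := (Finset.mem_filter.mp hj0).2
        have heq : θ j = m • (q + c j) - m • (q + c j0) := by
          rw [hθ]
          simp only [smul_add]
          abel
        rw [heq]
        exact sub_mem hgj hgj0
      · show a • θ j = 0
        rw [hθ]
        simp only [smul_sub, smul_comm a m]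
        rw [hac, hac]
        simp
    calc Bm.card ≤ m * (Bm.image θ).card := by
          apply Finset.card_le_mul_card_image
          intro b hb
          obtain ⟨j', hj', hθj'⟩ := Finset.mem_image.mp hb
          set d := Nat.gcd m a with hd
          have hdpos : 0 < d := Nat.gcd_pos_of_pos_left a hm
          have hda : d ∣ a := Nat.gcd_dvd_right m a
          set k := a / d with hk
          have hkd : k * d = a := Nat.div_mul_cancel hda
          have hkpos : 0 < k := by
            rcases Nat.eq_zero_or_pos k with h0 | h0
            · simp [h0] at hkd; omega
            · exact h0
          have hdk : d * k = a := by rw [Nat.mul_comm]; exact hkd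
          have hdm : d ≤ m := Nat.le_of_dvd hm (Nat.gcd_dvd_left m a)
          calc (Bm.filter (fun j => θ j = b)).card
              ≤ (Finset.range d).card := by
                apply Finset.card_le_card_of_injOn (fun j => j / k)
                · intro j hj
                  have hja : j < a := Finset.mem_range.mp
                    (Finset.mem_filter.mp (Finset.mem_filter.mp hj).1).1
                  simp only [Finset.coe_range, Set.mem_Iio]
                  exact Nat.div_lt_of_lt_mul (by rw [hkd]; exact hja)
                · intro j1 h1 j2 h2 hjj
                  simp only [Finset.coe_filter, Set.mem_setOf_eq] at h1 h2
                  have hθ12 : θ j1 = θ j2 := by rw [h1.2, h2.2]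
                  have hdvd := div_dvd_cancel hm (key j1 j2 hθ12)
                  exact nat_recover hdvd hjj
            _ = d := Finset.card_range d
            _ ≤ m := hdm
        _ ≤ m * l := by
          apply Nat.mul_le_mul_left
          have hsub : Bm.image θ ⊆ hKfin.toFinset := by
            intro t ht
            obtain ⟨j, hj, rfl⟩ := Finset.mem_image.mp ht
            exact hKfin.mem_toFinset.mpr (himg j hj)
          calc (Bm.image θ).card ≤ hKfin.toFinset.card := Finset.card_le_card hsub
            _ = Nat.card ↥K := by
                rw [Nat.card_coe_set_eq]
                exact (Set.ncard_eq_toFinset_card K hKfin).symm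
            _ ≤ l := hKcard
        _ = l * m := mul_comm m l
  -- summing up
  set S := (Finset.range a).filter (fun m => 0 < m ∧ m^2*l < a) with hS
  set Bad := S.biUnion (fun m => (Finset.range a).filter (fun j => m • (q + c j) ∈ G)) with hBad
  have hBadcard : Bad.card < a := by
    rcases S.eq_empty_or_nonempty with hSe | hSne
    · rw [hBad, hSe]
      simpa using ha
    set M := S.max' hSne with hM
    have hMS : M ∈ S := S.max'_mem hSne
    obtain ⟨hMr, hM0, hMa⟩ : M ∈ Finset.range a ∧ 0 < M ∧ M^2*l < a := by
      have := Finset.mem_filter.mp hMS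
      exact ⟨this.1, this.2.1, this.2.2⟩
    have hScard : S.card ≤ M := by
      have hsub : S ⊆ Finset.Icc 1 M := by
        intro m hm
        have := Finset.mem_filter.mp hm
        exact Finset.mem_Icc.mpr ⟨this.2.1, S.le_max' m hm⟩
      calc S.card ≤ (Finset.Icc 1 M).card := Finset.card_le_card hsub
        _ = M := by rw [Nat.card_Icc]; omega
    calc Bad.card ≤ ∑ m ∈ S, ((Finset.range a).filter (fun j => m • (q + c j) ∈ G)).card :=
          Finset.card_biUnion_le
      _ ≤ ∑ m ∈ S, l * M := by
          apply Finset.sum_le_sum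
          intro m hm
          have h1 := hBm m (Finset.mem_filter.mp hm).2.1
          have h2 : m ≤ M := S.le_max' m hm
          exact le_trans h1 (Nat.mul_le_mul_left l h2)
      _ = S.card * (l * M) := by rw [Finset.sum_const, smul_eq_mul]
      _ ≤ M * (l * M) := Nat.mul_le_mul_right _ hScard
      _ = M^2 * l := by ring
      _ < a := hMa
  -- pick a good j
  have hex : ∃ j ∈ Finset.range a, j ∉ Bad := by
    by_contra hcon
    push_neg at hcon
    have : Finset.range a ⊆ Bad := fun j hj => hcon j hj
    have := Finset.card_le_card this
    rw [Finset.card_range] at this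
    omega
  obtain ⟨j, hjr, hjgood⟩ := hex
  refine ⟨q + c j, ?_, ?_⟩
  · rw [smul_add, haq, hac]
    simp
  · intro m hm hml hmem
    apply hjgood
    rw [hBad]
    apply Finset.mem_biUnion.mpr
    have hma : m < a := by
      have h1 : m ≤ m^2 := by nlinarith
      have h2 : m^2 ≤ m^2*l := Nat.le_mul_of_pos_right _ hl1
      omega
    refine ⟨m, ?_, ?_⟩
    · exact Finset.mem_filter.mpr ⟨Finset.mem_range.mpr hma, hm, hml⟩
    · exact Finset.mem_filter.mpr ⟨hjr, hmem⟩
end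

section
/- Let V be a vector space over ℚ equipped with a symmetric bilinear form B and a linear functional φ. Let v₁, v₂, …, vₙ ∈ V be vectors such that: φ(vᵢ) > 0 for every i; B(vᵢ, vⱼ) ≥ 0 for all i ≠ j; and B is negative definite on the span of v₂, …, vₙ, i.e. B(w, w) < 0 for every nonzero w in the ℚ-linear span of v₂, …, vₙ. Then v₁ does not lie in the ℚ-linear span of v₂, …, vₙ. -/
/-- Let `V` be a `ℚ`-vector space with a symmetric bilinear form `B` and a linear
functional `φ`. If `v 0, v 1, …, v n` are vectors with `φ (v i) > 0` for all `i`,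
`B (v i) (v j) ≥ 0` for `i ≠ j`, and `B` negative definite on the span of
`v 1, …, v n`, then `v 0` does not lie in the span of `v 1, …, v n`. -/
theorem stmt7 {V : Type*} [AddCommGroup V] [Module ℚ V]
    (B : V →ₗ[ℚ] V →ₗ[ℚ] ℚ) (hsymm : ∀ x y : V, B x y = B y x)
    (φ : V →ₗ[ℚ] ℚ) (n : ℕ) (v : Fin (n + 1) → V)
    (hpos : ∀ i, 0 < φ (v i))
    (hnonneg : ∀ i j, i ≠ j → 0 ≤ B (v i) (v j))
    (hnegdef : ∀ w ∈ Submodule.span ℚ (Set.range fun i : Fin n => v i.succ),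
      w ≠ 0 → B w w < 0) :
    v 0 ∉ Submodule.span ℚ (Set.range fun i : Fin n => v i.succ) := by
  intro hmem
  obtain ⟨c, hc⟩ := (Submodule.mem_span_range_iff_exists_fun ℚ).mp hmem
  set cp : Fin n → ℚ := fun i => max (c i) 0 with hcp
  set cm : Fin n → ℚ := fun i => max (-c i) 0 with hcm
  have hcp0 : ∀ i, 0 ≤ cp i := fun i => le_max_right _ _
  have hcm0 : ∀ i, 0 ≤ cm i := fun i => le_max_right _ _
  have hsub : ∀ i, cp i - cm i = c i := by
    intro i
    rcases le_total (c i) 0 with h | h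
    · simp [hcp, hcm, max_eq_right h, max_eq_left (neg_nonneg.mpr h)]
    · simp [hcp, hcm, max_eq_left h, max_eq_right (neg_nonpos.mpr h)]
  have hmul0 : ∀ i, cm i * cp i = 0 := by
    intro i
    rcases le_total (c i) 0 with h | h
    · simp [hcp, max_eq_right h]
    · simp [hcm, max_eq_right (neg_nonpos.mpr h)]
  set p : V := ∑ i, cp i • v i.succ with hp
  set m : V := ∑ i, cm i • v i.succ with hm
  have hpm : v 0 = p - m := by
    rw [hp, hm, ← Finset.sum_sub_distrib, ← hc]
    congr 1; ext i; rw [← sub_smul, hsub]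
  have hpmem : p ∈ Submodule.span ℚ (Set.range fun i : Fin n => v i.succ) := by
    refine Submodule.sum_mem _ fun i _ => Submodule.smul_mem _ _ ?_
    exact Submodule.subset_span ⟨i, rfl⟩
  have hBmp : 0 ≤ B m p := by
    rw [hm, hp]
    simp only [map_sum, LinearMap.sum_apply, map_smul, LinearMap.smul_apply,
      smul_eq_mul, Finset.mul_sum]
    refine Finset.sum_nonneg fun i _ => Finset.sum_nonneg fun j _ => ?_
    rcases eq_or_ne i j with rfl | hij
    · rw [← mul_assoc, mul_comm (cp i) (cm i), hmul0]; simp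
    · exact mul_nonneg (hcp0 i) (mul_nonneg (hcm0 j)
        (hnonneg _ _ (fun h => hij (Fin.succ_injective _ h).symm)))
  have hB0p : 0 ≤ B (v 0) p := by
    rw [hp, map_sum]
    simp only [map_smul, smul_eq_mul]
    refine Finset.sum_nonneg fun j _ => mul_nonneg (hcp0 j)
      (hnonneg _ _ ?_)
    exact (Fin.succ_ne_zero j).symm
  by_cases hp0 : p = 0
  · have hv0 : v 0 = -m := by rw [hpm, hp0, zero_sub]
    have : φ (v 0) ≤ 0 := by
      rw [hv0, map_neg, neg_nonpos, hm, map_sum]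
      exact Finset.sum_nonneg fun i _ => by
        rw [map_smul, smul_eq_mul]
        exact mul_nonneg (hcm0 i) (hpos _).le
    exact absurd (hpos 0) (not_lt.mpr this)
  · have hBpp : B p p < 0 := hnegdef p hpmem hp0
    have : B (v 0) p = B p p - B m p := by
      rw [hpm, map_sub, LinearMap.sub_apply]
    linarith
end
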